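/- Let R = Z[X_1,X_2]/(X_1², X_1X_2, X_2²) over a field Z. For a ∈ Z let I_a be the ideal generated by x_1 + a·x_2. Then for a, b ∈ Z, the R-modules R/I_a and R/I_b are isomorphic if and only if a = b. In particular, if Z is infinite there are infinitely many pairwise non-isomorphic R-modules of Z-dimension 2. -/
import Mathlib


open MvPolynomial

/-- The ring `R = Z[X₁,X₂]/(X₁², X₁X₂, X₂²)` over a field `Z`. -/
abbrev SmallLocalRing (Z : Type*) [Field Z] :=
  MvPolynomial (Fin 2) Z ⧸
    Ideal.span {(X 0 * X 0 : MvPolynomial (Fin 2) Z), X 0 * X 1, X 1 * X 1}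

/-- Evaluation into dual numbers sending `X 0 ↦ c • ε`, `X 1 ↦ ε`; it kills the
quadratic relations, hence descends to `SmallLocalRing Z`. -/
noncomputable def smallEval {Z : Type*} [Field Z] (c : Z) :
    SmallLocalRing Z →+* DualNumber Z :=
  Ideal.Quotient.lift _
    ((aeval ![c • DualNumber.eps, DualNumber.eps] :
        MvPolynomial (Fin 2) Z →ₐ[Z] DualNumber Z) : MvPolynomial (Fin 2) Z →+* DualNumber Z)
    (by
      intro p hp
      show p ∈ RingHom.ker _
      refine Ideal.span_le.mpr ?_ hp
      rintro q hq
      simp only [Set.mem_insert_iff, Set.mem_singleton_iff] at hq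
      rcases hq with rfl | rfl | rfl <;>
        simp [SetLike.mem_coe, RingHom.mem_ker, mul_mul_mul_comm, DualNumber.eps_mul_eps,
          Matrix.cons_val_zero, Matrix.cons_val_one])

theorem smallEval_mk {Z : Type*} [Field Z] (c d : Z) :
    smallEval c ((Ideal.Quotient.mk _ (X 0 + C d * X 1) : SmallLocalRing Z)) =
      (c + d) • DualNumber.eps := by
  rw [smallEval, Ideal.Quotient.lift_mk]
  simp only [AlgHom.coe_toRingHom, map_add, map_mul, aeval_X, aeval_C, Matrix.cons_val_zero,
    Matrix.cons_val_one, Matrix.head_cons, add_smul, ← Algebra.smul_def]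

theorem span_eq_imp {Z : Type*} [Field Z] (a b : Z)
    (h : (Ideal.Quotient.mk _ (X 0 + C a * X 1) : SmallLocalRing Z) ∈
      Ideal.span {(Ideal.Quotient.mk _ (X 0 + C b * X 1) : SmallLocalRing Z)}) : a = b := by
  rw [Ideal.mem_span_singleton'] at h
  obtain ⟨r, hr⟩ := h
  have key := congrArg (smallEval (-b)) hr
  rw [map_mul, smallEval_mk, smallEval_mk, neg_add_cancel, zero_smul, mul_zero] at key
  have h2 := congrArg TrivSqZeroExt.snd key.symm
  simp only [TrivSqZeroExt.snd_smul, DualNumber.eps, TrivSqZeroExt.snd_inr,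
    TrivSqZeroExt.snd_zero, smul_eq_mul, mul_one] at h2
  linear_combination h2

/-- **Distinguishing cyclic modules over `Z[X₁,X₂]/(X₁²,X₁X₂,X₂²)`.**
Let `R = Z[X₁,X₂]/(X₁²,X₁X₂,X₂²)` over a field `Z`, with `x₁, x₂` the images of
`X₁, X₂`, and for `a ∈ Z` let `I_a` be the ideal of `R` generated by `x₁ + a·x₂`.
Then for `a, b ∈ Z` the `R`-modules `R/I_a` and `R/I_b` are isomorphic iff `a = b`. -/
theorem cyclic_modules_iso_iff (Z : Type*) [Field Z] (a b : Z) :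
    Nonempty ((SmallLocalRing Z ⧸ Ideal.span
        {(Ideal.Quotient.mk _ (X 0 + C a * X 1) : SmallLocalRing Z)}) ≃ₗ[SmallLocalRing Z]
      (SmallLocalRing Z ⧸ Ideal.span
        {(Ideal.Quotient.mk _ (X 0 + C b * X 1) : SmallLocalRing Z)})) ↔ a = b := by
  constructor
  · rintro ⟨e⟩
    have hann := e.annihilator_eq
    rw [Ideal.annihilator_quotient, Ideal.annihilator_quotient] at hann
    exact span_eq_imp a b (hann ▸ Ideal.subset_span rfl)
  · rintro rfl
    exact ⟨LinearEquiv.refl _ _⟩
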